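/- Suppose A_F > 0 and φ''_{2F} ≤ 0. Then L^{qcf} is invertible and satisfies ‖(L^{qcf})^{−1}‖_{L(U^{0,∞}, U^{2,∞})} ≤ 1/A_F; that is, for every f, the solution u of L^{qcf}u = f satisfies ‖u''‖_{ℓ^∞_ε} ≤ A_F^{−1}‖f‖_{ℓ^∞_ε}. If A_F = 0 then L^{qcf} is singular. -/

import Mathlib

/-- Discrete Dirichlet Laplacian. -/
noncomputable def L1 (ε : ℝ) (v : ℤ → ℝ) (j : ℤ) : ℝ :=
  (-v (j + 1) + 2 * v j - v (j - 1)) / ε ^ 2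

/-- Linearized atomistic operator. -/
noncomputable def La (ε φF φ2F : ℝ) (v : ℤ → ℝ) (j : ℤ) : ℝ :=
  φF * ((-v (j + 1) + 2 * v j - v (j - 1)) / ε ^ 2)
    + φ2F * ((-v (j + 2) + 2 * v j - v (j - 2)) / ε ^ 2)

/-- Linearized force-based QC operator. -/
noncomputable def Lqcf (K : ℕ) (ε φF φ2F : ℝ) (v : ℤ → ℝ) (j : ℤ) : ℝ :=
  if |j| ≤ (K : ℤ) then La ε φF φ2F v j else (φF + 4 * φ2F) * L1 ε v j

/-- The U^{2,∞} norm: max of |u''_ℓ| over ℓ = -N+1,…,N-1. -/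
noncomputable def U2inf (N : ℕ) (ε : ℝ) (u : ℤ → ℝ) : ℝ :=
  ⨆ ℓ : Finset.Icc (-(N : ℤ) + 1) ((N : ℤ) - 1),
    |(u ((ℓ : ℤ) + 1) - 2 * u (ℓ : ℤ) + u ((ℓ : ℤ) - 1)) / ε ^ 2|

/-- The ℓ^∞_ε norm of a right-hand side on the interior indices. -/
noncomputable def U0inf (N : ℕ) (f : ℤ → ℝ) : ℝ :=
  ⨆ ℓ : Finset.Icc (-(N : ℤ) + 1) ((N : ℤ) - 1), |f (ℓ : ℤ)|

/-!
At an interior index `ℓ` where `|u''|` is maximal, the atomistic equation reads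
`-f ℓ = A_F u''_ℓ + φ''_{2F} (u''_{ℓ+1} + u''_{ℓ-1} - 2 u''_ℓ)`, and the second term has the sign
of `u''_ℓ` because `φ''_{2F} ≤ 0`; in the continuum region `-f ℓ = A_F u''_ℓ`. Either way
`A_F ‖u''‖_∞ ≤ ‖f‖_∞`. For `f = 0` this forces `u'' = 0`, hence `u = 0` by the boundary conditions,
so the square linear system is injective and therefore invertible. If `A_F = 0`, the bump
`N² - j²` has constant second difference and lies in the kernel.
-/

open Finset

theorem LinearMap.existsUnique_supported_solution {𝕜 ι : Type*} [Field 𝕜] {s : Finset ι}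
    (T : (ι → 𝕜) →ₗ[𝕜] (ι → 𝕜))
    (hT : ∀ u : ι → 𝕜, (∀ j ∉ s, u j = 0) → (∀ j ∈ s, T u j = 0) → u = 0) (f : ι → 𝕜) :
    ∃! u : ι → 𝕜, (∀ j ∉ s, u j = 0) ∧ ∀ j ∈ s, T u j = f j := by
  set E := Function.ExtendByZero.linearMap 𝕜 ((↑) : s → ι)
  have hE_mem (v : s → 𝕜) (i : s) : E v i = v i := Subtype.val_injective.extend_apply _ _ _
  have hE_notMem (v : s → 𝕜) (j : ι) (hj : j ∉ s) : E v j = 0 :=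
    Function.extend_apply' _ _ _ fun ⟨i, hi⟩ => hj (hi ▸ i.2)
  set S := LinearMap.funLeft 𝕜 𝕜 ((↑) : s → ι) ∘ₗ T ∘ₗ E
  have hS : Function.Injective S := by
    refine (injective_iff_map_eq_zero S).mpr fun v hv => funext fun i => ?_
    have hEv : E v = 0 := hT _ (hE_notMem v) fun j hj => congrFun hv ⟨j, hj⟩
    rw [← hE_mem v i, hEv, Pi.zero_apply, Pi.zero_apply]
  obtain ⟨v, hv⟩ := LinearMap.injective_iff_surjective.mp hS fun i => f i
  refine ⟨E v, ⟨hE_notMem v, fun j hj => congrFun hv ⟨j, hj⟩⟩, fun u ⟨hu0, hu⟩ => ?_⟩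
  refine sub_eq_zero.mp (hT _ (fun j hj => by simp [hu0 j hj, hE_notMem v j hj]) fun j hj => ?_)
  rw [map_sub, Pi.sub_apply, hu j hj, sub_eq_zero]
  exact (congrFun hv ⟨j, hj⟩).symm

theorem mul_abs_le_abs_add_nonpos_mul {A p a b c : ℝ} (hp : p ≤ 0) (hb : |b| ≤ |a|)
    (hc : |c| ≤ |a|) : A * |a| ≤ |A * a + p * (b + c - 2 * a)| := by
  rcases abs_le.mp hb with ⟨hb₁, hb₂⟩
  rcases abs_le.mp hc with ⟨hc₁, hc₂⟩
  rcases abs_cases a with ⟨ha, ha₀⟩ | ⟨ha, ha₀⟩ <;> rw [ha] at hb₁ hb₂ hc₁ hc₂ ⊢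
  · have : 0 ≤ p * (b + c - 2 * a) := mul_nonneg_of_nonpos_of_nonpos hp (by linarith)
    linarith [le_abs_self (A * a + p * (b + c - 2 * a))]
  · have : p * (b + c - 2 * a) ≤ 0 := mul_nonpos_of_nonpos_of_nonneg hp (by linarith)
    linarith [neg_abs_le (A * a + p * (b + c - 2 * a))]

theorem eq_zero_of_secondDiff_eq_zero {u : ℤ → ℝ} {a b : ℤ} (ha : u a = 0) (hb : u b = 0)
    (h : ∀ j, a < j → j < b → u (j + 1) - 2 * u j + u (j - 1) = 0) {j : ℤ} (haj : a ≤ j)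
    (hjb : j ≤ b) : u j = 0 := by
  set d := u (a + 1) - u a
  have hstep (k : ℕ) (hk : a + k < b) : u (a + k + 1) - u (a + k) = d := by
    induction k with
    | zero => simp [d]
    | succ k ih =>
      have := h (a + k + 1) (by omega) (by omega)
      push_cast at hk this ⊢
      rw [add_sub_cancel_right] at this
      rw [← add_assoc] at hk ⊢
      linarith [ih (by omega)]
  have hlin (k : ℕ) (hk : a + k ≤ b) : u (a + k) = k * d := by
    induction k with
    | zero => simpa using ha
    | succ k ih =>
      push_cast at hk ⊢
      rw [← add_assoc]
      linarith [hstep k (by omega), ih (by omega)]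
  obtain ⟨k, rfl⟩ : ∃ k : ℕ, j = a + k := ⟨(j - a).toNat, by omega⟩
  obtain ⟨m, rfl⟩ : ∃ m : ℕ, b = a + k + m := ⟨(b - (a + k)).toNat, by omega⟩
  have hd : ((k + m : ℕ) : ℝ) * d = 0 := by rw [← hlin (k + m) (by omega), ← hb]; push_cast; ring_nf
  rcases mul_eq_zero.mp hd with hkm | hd
  · obtain rfl : k = 0 := by have := Nat.cast_eq_zero.mp hkm; omega
    simpa using ha
  · rw [hlin k (by omega), hd, mul_zero]

noncomputable def secondDiff (ε : ℝ) (u : ℤ → ℝ) (j : ℤ) : ℝ :=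
  (u (j + 1) - 2 * u j + u (j - 1)) / ε ^ 2

theorem L1_eq_neg_secondDiff (ε : ℝ) (u : ℤ → ℝ) (j : ℤ) : L1 ε u j = -secondDiff ε u j := by
  rw [L1, secondDiff]; ring

theorem La_eq_secondDiff (ε φF φ2F : ℝ) (u : ℤ → ℝ) (j : ℤ) :
    La ε φF φ2F u j = -((φF + 4 * φ2F) * secondDiff ε u j + φ2F *
      (secondDiff ε u (j + 1) + secondDiff ε u (j - 1) - 2 * secondDiff ε u j)) := by
  simp only [La, secondDiff]
  ring_nf

noncomputable def lqcfLinearMap (K : ℕ) (ε φF φ2F : ℝ) : (ℤ → ℝ) →ₗ[ℝ] (ℤ → ℝ) where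
  toFun := Lqcf K ε φF φ2F
  map_add' u v := by
    funext j; simp only [Lqcf, La, L1, Pi.add_apply]; split_ifs <;> ring
  map_smul' c u := by
    funext j; simp only [Lqcf, La, L1, Pi.smul_apply, smul_eq_mul, RingHom.id_apply]
    split_ifs <;> ring

theorem mem_Icc_iff_abs_lt {n j : ℤ} : j ∈ Icc (-n + 1) (n - 1) ↔ |j| < n := by
  rw [mem_Icc, abs_lt]; omega

section Lqcf

variable {N K : ℕ} {ε φF φ2F : ℝ}

theorem abs_secondDiff_le_U2inf (u : ℤ → ℝ) {j : ℤ} (hj : j ∈ Icc (-(N : ℤ) + 1) ((N : ℤ) - 1)) :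
    |secondDiff ε u j| ≤ U2inf N ε u :=
  le_ciSup (f := fun ℓ : Icc (-(N : ℤ) + 1) ((N : ℤ) - 1) => |secondDiff ε u ℓ|)
    (Finite.bddAbove_range _) ⟨j, hj⟩

theorem mul_abs_secondDiff_le_abs_Lqcf (hφ : φ2F ≤ 0) {u : ℤ → ℝ} {j : ℤ}
    (hmax : |j| ≤ K → |secondDiff ε u (j + 1)| ≤ |secondDiff ε u j| ∧
      |secondDiff ε u (j - 1)| ≤ |secondDiff ε u j|) :
    (φF + 4 * φ2F) * |secondDiff ε u j| ≤ |Lqcf K ε φF φ2F u j| := by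
  rw [Lqcf]
  split_ifs with hj
  · rw [La_eq_secondDiff, abs_neg]
    exact mul_abs_le_abs_add_nonpos_mul hφ (hmax hj).1 (hmax hj).2
  · rw [L1_eq_neg_secondDiff, mul_neg, abs_neg, abs_mul]
    gcongr
    exact le_abs_self _

theorem exists_mul_U2inf_le_abs_Lqcf (hK2 : K + 2 ≤ N) (hφ : φ2F ≤ 0)
    (hA : 0 ≤ φF + 4 * φ2F) (u : ℤ → ℝ) :
    ∃ ℓ ∈ Icc (-(N : ℤ) + 1) ((N : ℤ) - 1),
      (φF + 4 * φ2F) * U2inf N ε u ≤ |Lqcf K ε φF φ2F u ℓ| := by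
  have hne : (Icc (-(N : ℤ) + 1) ((N : ℤ) - 1)).Nonempty := ⟨0, by rw [mem_Icc]; omega⟩
  have := hne.to_subtype
  obtain ⟨ℓ, hℓ, hmax⟩ := exists_max_image _ (fun j => |secondDiff ε u j|) hne
  have hU : U2inf N ε u ≤ |secondDiff ε u ℓ| := ciSup_le fun j => hmax j j.2
  have hℓ' := mem_Icc.mp hℓ
  refine ⟨ℓ, hℓ, (mul_le_mul_of_nonneg_left hU hA).trans
    (mul_abs_secondDiff_le_abs_Lqcf hφ fun hℓK => ⟨hmax _ ?_, hmax _ ?_⟩)⟩ <;>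
  · rw [mem_Icc]; have := abs_le.mp hℓK; omega

theorem U2inf_le_of_Lqcf_eq (hK2 : K + 2 ≤ N) (hφ : φ2F ≤ 0) (hA : 0 < φF + 4 * φ2F)
    {f u : ℤ → ℝ} (hf : ∀ j ∈ Icc (-(N : ℤ) + 1) ((N : ℤ) - 1), Lqcf K ε φF φ2F u j = f j) :
    U2inf N ε u ≤ 1 / (φF + 4 * φ2F) * U0inf N f := by
  obtain ⟨ℓ, hℓ, hle⟩ := exists_mul_U2inf_le_abs_Lqcf hK2 hφ hA.le u
  have hf_le : |f ℓ| ≤ U0inf N f :=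
    le_ciSup (f := fun ℓ : Icc (-(N : ℤ) + 1) ((N : ℤ) - 1) => |f ℓ|)
      (Finite.bddAbove_range _) ⟨ℓ, hℓ⟩
  rw [one_div_mul_eq_div, le_div_iff₀' hA]
  rw [hf ℓ hℓ] at hle
  exact hle.trans hf_le

theorem eq_zero_of_Lqcf_eq_zero (hK2 : K + 2 ≤ N) (hε : ε ≠ 0) (hφ : φ2F ≤ 0)
    (hA : 0 < φF + 4 * φ2F) {u : ℤ → ℝ} (hu0 : ∀ j ∉ Icc (-(N : ℤ) + 1) ((N : ℤ) - 1), u j = 0)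
    (hu : ∀ j ∈ Icc (-(N : ℤ) + 1) ((N : ℤ) - 1), Lqcf K ε φF φ2F u j = 0) : u = 0 := by
  have hU : U2inf N ε u ≤ 0 := by
    simpa [U0inf] using U2inf_le_of_Lqcf_eq hK2 hφ hA (f := 0) hu
  have hD (j : ℤ) (hj₁ : -(N : ℤ) < j) (hj₂ : j < N) : u (j + 1) - 2 * u j + u (j - 1) = 0 := by
    have hj : j ∈ Icc (-(N : ℤ) + 1) ((N : ℤ) - 1) := mem_Icc.mpr (by omega)
    have := abs_nonpos_iff.mp ((abs_secondDiff_le_U2inf u hj).trans hU)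
    exact (div_eq_zero_iff.mp this).resolve_right (pow_ne_zero 2 hε)
  funext j
  by_cases hj : j ∈ Icc (-(N : ℤ) + 1) ((N : ℤ) - 1)
  · have hj' := mem_Icc.mp hj
    exact eq_zero_of_secondDiff_eq_zero (hu0 _ (by simp)) (hu0 _ (by simp)) hD (by omega) (by omega)
  · exact hu0 j hj

theorem secondDiff_max_zero_sub_sq {j : ℤ} (hj : |j| < N) :
    secondDiff ε (fun i => max 0 ((N : ℝ) ^ 2 - (i : ℝ) ^ 2)) j = -2 / ε ^ 2 := by
  have hval (m : ℤ) (hm : |m| ≤ N) :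
      max 0 ((N : ℝ) ^ 2 - (m : ℝ) ^ 2) = (N : ℝ) ^ 2 - (m : ℝ) ^ 2 := by
    have : (m : ℝ) ^ 2 ≤ (N : ℝ) ^ 2 := by
      exact_mod_cast sq_le_sq.mpr (by simpa using hm : |m| ≤ |(N : ℤ)|)
    exact max_eq_right (by linarith)
  have := abs_lt.mp hj
  rw [secondDiff, hval j (by omega), hval (j + 1) (abs_le.mpr (by omega)),
    hval (j - 1) (abs_le.mpr (by omega))]
  push_cast
  ring

theorem exists_ne_zero_Lqcf_eq_zero (hK2 : K + 2 ≤ N) (hA : φF + 4 * φ2F = 0) :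
    ∃ u : ℤ → ℝ, (∀ j : ℤ, (N : ℤ) ≤ |j| → u j = 0) ∧ u ≠ 0 ∧
      ∀ j ∈ Icc (-(N : ℤ) + 1) ((N : ℤ) - 1), Lqcf K ε φF φ2F u j = 0 := by
  refine ⟨fun i => max 0 ((N : ℝ) ^ 2 - (i : ℝ) ^ 2), fun j hj => max_eq_left ?_, fun h => ?_,
    fun j _ => ?_⟩
  · have : (N : ℝ) ^ 2 ≤ (j : ℝ) ^ 2 := by
      exact_mod_cast sq_le_sq.mpr (by simpa using hj : |(N : ℤ)| ≤ |j|)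
    linarith
  · have h0 := congrFun h 0
    simp at h0
    omega
  · rw [Lqcf]
    split_ifs with hjK
    · have := abs_le.mp hjK
      rw [La_eq_secondDiff, hA, secondDiff_max_zero_sub_sq (by omega),
        secondDiff_max_zero_sub_sq (abs_lt.mpr ⟨by omega, by omega⟩),
        secondDiff_max_zero_sub_sq (abs_lt.mpr ⟨by omega, by omega⟩)]
      ring
    · rw [hA, zero_mul]

end Lqcf

theorem qcf_stability_U2inf_general
    (N K : ℕ) (hK2 : K + 2 ≤ N)
    (ε φF φ2F : ℝ) (hε : ε = 1 / N) (hφ : φ2F ≤ 0) :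
    (0 < φF + 4 * φ2F →
      (∀ f : ℤ → ℝ, ∃! u : ℤ → ℝ,
        (∀ j : ℤ, (N : ℤ) ≤ |j| → u j = 0) ∧
        (∀ j ∈ Finset.Icc (-(N : ℤ) + 1) ((N : ℤ) - 1),
          Lqcf K ε φF φ2F u j = f j)) ∧
      (∀ (f u : ℤ → ℝ),
        (∀ j : ℤ, (N : ℤ) ≤ |j| → u j = 0) →
        (∀ j ∈ Finset.Icc (-(N : ℤ) + 1) ((N : ℤ) - 1),
          Lqcf K ε φF φ2F u j = f j) →
        U2inf N ε u ≤ 1 / (φF + 4 * φ2F) * U0inf N f)) ∧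
    (φF + 4 * φ2F = 0 →
      ∃ u : ℤ → ℝ, (∀ j : ℤ, (N : ℤ) ≤ |j| → u j = 0) ∧ u ≠ 0 ∧
        ∀ j ∈ Finset.Icc (-(N : ℤ) + 1) ((N : ℤ) - 1),
          Lqcf K ε φF φ2F u j = 0) := by
  have hε0 : ε ≠ 0 := by
    have : (0 : ℝ) < N := by exact_mod_cast (by omega : 0 < N)
    rw [hε]; positivity
  have hvanish : ∀ u : ℤ → ℝ, (∀ j : ℤ, (N : ℤ) ≤ |j| → u j = 0) ↔
      ∀ j ∉ Icc (-(N : ℤ) + 1) ((N : ℤ) - 1), u j = 0 := by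
    simp only [mem_Icc_iff_abs_lt, not_lt, implies_true]
  refine ⟨fun hA => ⟨fun f => ?_, fun f u _ hf => U2inf_le_of_Lqcf_eq hK2 hφ hA hf⟩,
    exists_ne_zero_Lqcf_eq_zero hK2⟩
  simp only [hvanish]
  exact (lqcfLinearMap K ε φF φ2F).existsUnique_supported_solution
    (fun u hu0 hu => eq_zero_of_Lqcf_eq_zero hK2 hε0 hφ hA hu0 hu) f

/-- if A_F > 0 and φ2F'' ≤ 0 then L^{qcf} is invertible with
‖(L^{qcf})⁻¹‖_{L(U^{0,∞},U^{2,∞})} ≤ 1/A_F; if A_F = 0 then L^{qcf} is singular. -/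
theorem qcf_stability_U2inf
    (N K : ℕ) (hN : 2 ≤ N) (hK1 : 1 ≤ K) (hK2 : K + 2 ≤ N)
    (ε φF φ2F : ℝ) (hε : ε = 1 / N) (hφ : φ2F ≤ 0) :
    (0 < φF + 4 * φ2F →
      (∀ f : ℤ → ℝ, ∃! u : ℤ → ℝ,
        (∀ j : ℤ, (N : ℤ) ≤ |j| → u j = 0) ∧
        (∀ j ∈ Finset.Icc (-(N : ℤ) + 1) ((N : ℤ) - 1),
          Lqcf K ε φF φ2F u j = f j)) ∧
      (∀ (f u : ℤ → ℝ),
        (∀ j : ℤ, (N : ℤ) ≤ |j| → u j = 0) →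
        (∀ j ∈ Finset.Icc (-(N : ℤ) + 1) ((N : ℤ) - 1),
          Lqcf K ε φF φ2F u j = f j) →
        U2inf N ε u ≤ 1 / (φF + 4 * φ2F) * U0inf N f)) ∧
    (φF + 4 * φ2F = 0 →
      ∃ u : ℤ → ℝ, (∀ j : ℤ, (N : ℤ) ≤ |j| → u j = 0) ∧ u ≠ 0 ∧
        ∀ j ∈ Finset.Icc (-(N : ℤ) + 1) ((N : ℤ) - 1),
          Lqcf K ε φF φ2F u j = 0) :=
  qcf_stability_U2inf_general N K hK2 ε φF φ2F hε hφ
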